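/- Under Assumptions 1 and 2, for every scalar α > 0: ∂P_max^α ∩ ∂𝒳 ≠ ∅ if and only if α ≤ α*, where ∂U denotes the topological boundary (frontier) of a set U ⊆ ℝ^n. -/

import Mathlib

open Matrix Set Pointwise

namespace RPIScaling

/-- A C-set in `ℝ^p`: convex, compact, containing the origin in its interior. -/
def IsCSet {p : ℕ} (S : Set (Fin p → ℝ)) : Prop :=
  Convex ℝ S ∧ IsCompact S ∧ (0 : Fin p → ℝ) ∈ interior S

/-- Pontryagin difference `U ⊖ V`. -/
def pontryaginDiff {p : ℕ} (U V : Set (Fin p → ℝ)) : Set (Fin p → ℝ) :=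
  {x | ∀ v ∈ V, x + v ∈ U}

/-- Upper-left `r × r` block of `A`. -/
def blockA11 {n r : ℕ} (hrn : r ≤ n) (A : Matrix (Fin n) (Fin n) ℝ) :
    Matrix (Fin r) (Fin r) ℝ :=
  A.submatrix (Fin.castLE hrn) (Fin.castLE hrn)

/-- Upper `r × m` block of `E`. -/
def blockE1 {n m r : ℕ} (hrn : r ≤ n) (E : Matrix (Fin n) (Fin m) ℝ) :
    Matrix (Fin r) (Fin m) ℝ :=
  E.submatrix (Fin.castLE hrn) id

/-- Lower-right `(n-r) × (n-r)` block of `A`. -/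
def blockA22 {n : ℕ} (r : ℕ) (A : Matrix (Fin n) (Fin n) ℝ) :
    Matrix (Fin (n - r)) (Fin (n - r)) ℝ :=
  A.submatrix (fun i => ⟨r + i.1, by have h := i.2; omega⟩)
    (fun i => ⟨r + i.1, by have h := i.2; omega⟩)

/-- The controllability matrix `[E₁, A₁₁E₁, …, A₁₁^{r-1}E₁]` of the pair `(A₁₁, E₁)`. -/
def controllabilityMatrix {n m r : ℕ} (hrn : r ≤ n) (A : Matrix (Fin n) (Fin n) ℝ)
    (E : Matrix (Fin n) (Fin m) ℝ) : Matrix (Fin r) (Fin r × Fin m) ℝ :=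
  Matrix.of fun i p => ((blockA11 hrn A) ^ (p.1 : ℕ) * blockE1 hrn E) i p.2

/-- Assumption 1: block structure of `A` and `E`, controllability of `(A₁₁, E₁)`,
and `𝒳`, `𝒟*` are C-sets. -/
structure Assumption1 {n m r : ℕ} (hrn : r ≤ n) (A : Matrix (Fin n) (Fin n) ℝ)
    (E : Matrix (Fin n) (Fin m) ℝ) (X : Set (Fin n → ℝ)) (D : Set (Fin m → ℝ)) : Prop where
  hn : 0 < n
  hm : 0 < m
  hr : 0 < r
  lowerLeftA : ∀ i j : Fin n, r ≤ (i : ℕ) → (j : ℕ) < r → A i j = 0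
  lowerE : ∀ i : Fin n, r ≤ (i : ℕ) → ∀ j, E i j = 0
  controllable : (controllabilityMatrix hrn A E).rank = r
  hX : IsCSet X
  hD : IsCSet D

/-- All complex eigenvalues of `M` have modulus `< 1`. -/
def StrictlyStable {p : ℕ} (M : Matrix (Fin p) (Fin p) ℝ) : Prop :=
  ∀ μ ∈ spectrum ℂ (M.map (algebraMap ℝ ℂ)), ‖μ‖ < 1

/-- All complex eigenvalues of `M` have modulus `≤ 1`. -/
def Stable {p : ℕ} (M : Matrix (Fin p) (Fin p) ℝ) : Prop :=
  ∀ μ ∈ spectrum ℂ (M.map (algebraMap ℝ ℂ)), ‖μ‖ ≤ 1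

/-- Assumption 2: the eigenvalues of `A₁₁` and `A₂₂` are strictly stable. -/
def Assumption2 {n r : ℕ} (hrn : r ≤ n) (A : Matrix (Fin n) (Fin n) ℝ) : Prop :=
  StrictlyStable (blockA11 hrn A) ∧ StrictlyStable (blockA22 r A)

/-- Assumption 2': the eigenvalues of `A₂₂` are stable. -/
def Assumption2' {n : ℕ} (r : ℕ) (A : Matrix (Fin n) (Fin n) ℝ) : Prop :=
  Stable (blockA22 r A)

/-- `P` is robust positively invariant for disturbance scaling `α`. -/
def IsRPI {n m : ℕ} (A : Matrix (Fin n) (Fin n) ℝ) (E : Matrix (Fin n) (Fin m) ℝ)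
    (X : Set (Fin n → ℝ)) (D : Set (Fin m → ℝ)) (α : ℝ) (P : Set (Fin n → ℝ)) : Prop :=
  P ⊆ X ∧ ∀ x ∈ P, ∀ d ∈ α • D, A.mulVec x + E.mulVec d ∈ P

/-- The maximal RPI set: the union of all RPI sets. -/
def Pmax {n m : ℕ} (A : Matrix (Fin n) (Fin n) ℝ) (E : Matrix (Fin n) (Fin m) ℝ)
    (X : Set (Fin n → ℝ)) (D : Set (Fin m → ℝ)) (α : ℝ) : Set (Fin n → ℝ) :=
  ⋃₀ {P | IsRPI A E X D α P}

/-- The minimal RPI set: the intersection of all nonempty RPI sets together with the MRPI set. -/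
def Pmin {n m : ℕ} (A : Matrix (Fin n) (Fin n) ℝ) (E : Matrix (Fin n) (Fin m) ℝ)
    (X : Set (Fin n → ℝ)) (D : Set (Fin m → ℝ)) (α : ℝ) : Set (Fin n → ℝ) :=
  ⋂₀ ({P | IsRPI A E X D α P ∧ P.Nonempty} ∪ {Pmax A E X D α})

/-- The sequence `S_k^α`. -/
def Sseq {n m : ℕ} (A : Matrix (Fin n) (Fin n) ℝ) (E : Matrix (Fin n) (Fin m) ℝ)
    (X : Set (Fin n → ℝ)) (D : Set (Fin m → ℝ)) (α : ℝ) : ℕ → Set (Fin n → ℝ)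
  | 0 => X
  | k + 1 => A.mulVec ⁻¹' (pontryaginDiff (Sseq A E X D α k) (E.mulVec '' (α • D))) ∩ X

/-- The limit set `S_∞^α`. -/
def Sinf {n m : ℕ} (A : Matrix (Fin n) (Fin n) ℝ) (E : Matrix (Fin n) (Fin m) ℝ)
    (X : Set (Fin n → ℝ)) (D : Set (Fin m → ℝ)) (α : ℝ) : Set (Fin n → ℝ) :=
  ⋂ k : ℕ, Sseq A E X D α k

/-- The sequence `R_k^α` of reachable sets. -/
def Rseq {n m : ℕ} (A : Matrix (Fin n) (Fin n) ℝ) (E : Matrix (Fin n) (Fin m) ℝ)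
    (D : Set (Fin m → ℝ)) (α : ℝ) : ℕ → Set (Fin n → ℝ)
  | 0 => {0}
  | k + 1 => A.mulVec '' (Rseq A E D α k) + E.mulVec '' (α • D)

/-- The limit set `R_∞^α`. -/
def Rinf {n m : ℕ} (A : Matrix (Fin n) (Fin n) ℝ) (E : Matrix (Fin n) (Fin m) ℝ)
    (D : Set (Fin m → ℝ)) (α : ℝ) : Set (Fin n → ℝ) :=
  ⋃ k : ℕ, Rseq A E D α k

/-- The critical scaling factor `α*`. -/
noncomputable def alphaStar {n m : ℕ} (A : Matrix (Fin n) (Fin n) ℝ)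
    (E : Matrix (Fin n) (Fin m) ℝ) (X : Set (Fin n → ℝ)) (D : Set (Fin m → ℝ)) : ℝ :=
  sSup {α : ℝ | 0 < α ∧ Rinf A E D α ⊆ X}

/-- The sequence `Q_k^α` used to characterize the maximal controlled invariant set. -/
def Qseq {n m : ℕ} (A : Matrix (Fin n) (Fin n) ℝ) (E : Matrix (Fin n) (Fin m) ℝ)
    (X : Set (Fin n → ℝ)) (D : Set (Fin m → ℝ)) (α : ℝ) : ℕ → Set (Fin n → ℝ)
  | 0 => X
  | k + 1 => A.mulVec ⁻¹' (Qseq A E X D α k + -(E.mulVec '' (α • D))) ∩ X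

/-- `C` is controlled invariant for input-constraint scaling `α`. -/
def IsCI {n m : ℕ} (A : Matrix (Fin n) (Fin n) ℝ) (E : Matrix (Fin n) (Fin m) ℝ)
    (X : Set (Fin n → ℝ)) (D : Set (Fin m → ℝ)) (α : ℝ) (C : Set (Fin n → ℝ)) : Prop :=
  C ⊆ X ∧ ∀ x ∈ C, ∃ d ∈ α • D, A.mulVec x + E.mulVec d ∈ C

/-- The maximal controlled invariant set: the union of all CI sets. -/
def Cmax {n m : ℕ} (A : Matrix (Fin n) (Fin n) ℝ) (E : Matrix (Fin n) (Fin m) ℝ)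
    (X : Set (Fin n → ℝ)) (D : Set (Fin m → ℝ)) (α : ℝ) : Set (Fin n → ℝ) :=
  ⋃₀ {C | IsCI A E X D α C}

/-- The Minkowski sum `W = ⨁_{k=0}^{M-1} A₁₁^k E₁ 𝒟*`. -/
def Wset {n m r : ℕ} (hrn : r ≤ n) (A : Matrix (Fin n) (Fin n) ℝ)
    (E : Matrix (Fin n) (Fin m) ℝ) (D : Set (Fin m → ℝ)) (M : ℕ) : Set (Fin r → ℝ) :=
  {w | ∃ d : Fin M → Fin m → ℝ, (∀ i, d i ∈ D) ∧
    w = ∑ i : Fin M, ((blockA11 hrn A) ^ (i : ℕ) * blockE1 hrn E).mulVec (d i)}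

end RPIScaling

/-!
Both sides are equivalent to `R_∞^α ⊆ 𝒳`.

Since `R_∞^α = α • R_∞^1`, `𝒳` is closed, bounded and star-shaped about `0`, and `R_∞^1` contains
a nonzero point (controllability makes `E ≠ 0`), the admissible scalings form the interval
`(0, α*]`, with `α*` attained.

If `P_max^α` is nonempty, pick `x₀` in it: for `y ∈ R_j^α` and `k ≥ j` the points `A^k x₀ + y` lie
in `P_max^α ⊆ 𝒳` and tend to `y`: `A^k → 0`, the spectrum of `A` being that of `A₁₁` and `A₂₂`.

Conversely, if `R_∞^α ⊆ 𝒳` then `R_∞^α` is RPI, so `P_max^α` contains a nonzero point. If the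
compact set `P_max^α` missed `∂𝒳` it would lie in the interior of `𝒳`, so some dilation
`c • P_max^α` with `c > 1` would still lie in `𝒳`; being RPI (as `c⁻¹ • 𝒟^α ⊆ 𝒟^α`), it would lie
in `P_max^α`, and a bounded set invariant under a dilation by `c > 1` is `{0}` or empty.
-/

open Filter Topology

theorem tendsto_pow_atTop_nhds_zero_of_spectralRadius_lt_one {B : Type*} [NormedRing B]
    [NormedAlgebra ℂ B] [CompleteSpace B] {a : B} (ha : spectralRadius ℂ a < 1) :
    Tendsto (a ^ ·) atTop (𝓝 0) := by
  obtain ⟨t, hat, ht1⟩ := ENNReal.lt_iff_exists_nnreal_btwn.mp ha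
  have ht1 : (t : ℝ) < 1 := by exact_mod_cast ht1
  have hbound : ∀ᶠ k : ℕ in atTop, ‖a ^ k‖ ≤ (t : ℝ) ^ k := by
    filter_upwards [eventually_ge_atTop 1,
      (spectrum.pow_nnnorm_pow_one_div_tendsto_nhds_spectralRadius a).eventually_lt_const hat]
      with k hk1 hk
    have := ENNReal.rpow_le_rpow hk.le (Nat.cast_nonneg k)
    rw [← ENNReal.rpow_mul, one_div_mul_cancel (by positivity), ENNReal.rpow_one,
      ENNReal.rpow_natCast] at this
    exact_mod_cast this
  exact squeeze_zero_norm' hbound (tendsto_pow_atTop_nhds_zero_of_lt_one t.2 ht1)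

theorem subset_interior_of_frontier_inter_frontier_eq_empty {T : Type*} [TopologicalSpace T]
    {P S : Set T} (hPS : P ⊆ S) (h : frontier P ∩ frontier S = ∅) : P ⊆ interior S := by
  intro x hx
  by_contra hxS
  exact h.subset ⟨⟨subset_closure hx, fun hxP => hxS (interior_mono hPS hxP)⟩,
    ⟨subset_closure (hPS hx), hxS⟩⟩

theorem IsCompact.exists_one_lt_smul_subset {V : Type*} [TopologicalSpace V] [MulAction ℝ V]
    [ContinuousSMul ℝ V] {K U : Set V} (hK : IsCompact K) (hU : IsOpen U) (hKU : K ⊆ U) :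
    ∃ c : ℝ, 1 < c ∧ c • K ⊆ U := by
  have hnhds : ∀ᶠ c in 𝓝 (1 : ℝ), ∀ x ∈ K, c • x ∈ U :=
    hK.eventually_forall_of_forall_eventually fun x hx =>
      continuous_smul.continuousAt.preimage_mem_nhds <| by
        simpa using hU.mem_nhds (hKU hx)
  obtain ⟨c, hcU, hc⟩ := ((hnhds.filter_mono nhdsWithin_le_nhds).and
    (self_mem_nhdsWithin (s := Set.Ioi 1))).exists
  exact ⟨c, hc, Set.smul_set_subset_iff.2 hcU⟩

theorem eq_zero_of_smul_subset_self {V : Type*} [NormedAddCommGroup V] [NormedSpace ℝ V]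
    {S : Set V} (hS : Bornology.IsBounded S) {c : ℝ} (hc : 1 < c) (hcS : c • S ⊆ S) {x : V}
    (hx : x ∈ S) : x = 0 := by
  have hpow : ∀ k : ℕ, c ^ k • x ∈ S := by
    intro k
    induction k with
    | zero => simpa using hx
    | succ k ih => rw [pow_succ', mul_smul]; exact hcS (Set.smul_mem_smul_set ih)
  obtain ⟨R, hR⟩ := hS.exists_norm_le
  by_contra hx0
  obtain ⟨k, hk⟩ := pow_unbounded_of_one_lt (R / ‖x‖) hc
  have hRk := hR _ (hpow k)
  rw [norm_smul, Real.norm_of_nonneg (by positivity)] at hRk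
  rw [div_lt_iff₀ (norm_pos_iff.2 hx0)] at hk
  linarith

theorem StarConvex.smul_subset_of_le {V : Type*} [AddCommGroup V] [Module ℝ V] {R X : Set V}
    (hX : StarConvex ℝ 0 X) {β γ : ℝ} (hγ : 0 ≤ γ) (hγβ : γ ≤ β) (hβX : β • R ⊆ X) :
    γ • R ⊆ X := by
  obtain rfl | hβ := hγ.trans hγβ |>.eq_or_lt
  · obtain rfl : γ = 0 := le_antisymm hγβ hγ
    exact hβX
  rintro _ ⟨y, hy, rfl⟩
  have := hX.smul_mem (hβX (Set.smul_mem_smul_set hy)) (div_nonneg hγ hβ.le)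
    ((div_le_one hβ).2 hγβ)
  rwa [smul_smul, div_mul_cancel₀ _ hβ.ne'] at this

theorem le_sSup_smul_subset_iff {V : Type*} [NormedAddCommGroup V] [NormedSpace ℝ V]
    {R X : Set V} (hXc : IsClosed X) (hXconv : StarConvex ℝ 0 X)
    (hXb : Bornology.IsBounded X) {y : V} (hyR : y ∈ R) (hy0 : y ≠ 0) {α : ℝ} (hα : 0 < α) :
    α ≤ sSup {β : ℝ | 0 < β ∧ β • R ⊆ X} ↔ α • R ⊆ X := by
  set T : Set ℝ := {β | 0 < β ∧ β • R ⊆ X}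
  have hbdd : BddAbove T := by
    obtain ⟨M, hM⟩ := hXb.exists_norm_le
    refine ⟨M / ‖y‖, fun β ⟨hβ, hβX⟩ => ?_⟩
    have hβy := hM _ (hβX (Set.smul_mem_smul_set hyR))
    rw [norm_smul, Real.norm_of_nonneg hβ.le] at hβy
    exact (le_div_iff₀ (norm_pos_iff.2 hy0)).2 hβy
  refine ⟨fun hαT => ?_, fun hαX => le_csSup hbdd ⟨hα, hαX⟩⟩
  have hT : T.Nonempty := by
    by_contra hT
    rw [Set.not_nonempty_iff_eq_empty.1 hT, Real.sSup_empty] at hαT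
    linarith
  have hclosed : IsClosed {β : ℝ | β • R ⊆ X} := by
    simp only [Set.smul_set_subset_iff, Set.ofPred_forall]
    exact isClosed_biInter fun z _ => hXc.preimage (continuous_id.smul continuous_const)
  have hsup : sSup T • R ⊆ X :=
    closure_minimal (fun β hβ => hβ.2) hclosed (csSup_mem_closure hT hbdd)
  exact hXconv.smul_subset_of_le hα.le hαT hsup

theorem Matrix.exists_mulVec_ne_zero_of_zero_mem_interior {ι κ : Type*} [Fintype κ]
    [DecidableEq κ] {M : Matrix ι κ ℝ} (hM : M ≠ 0) {D : Set (κ → ℝ)} (hD : 0 ∈ interior D) :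
    ∃ d ∈ D, M *ᵥ d ≠ 0 := by
  by_contra! h
  refine hM (ext_of_mulVec_single fun j => ?_)
  have hnhds : ∀ᶠ t : ℝ in 𝓝 0, t • Pi.single j 1 ∈ D :=
    (continuous_id.smul continuous_const).tendsto' 0 0 (zero_smul _ _)
      |>.eventually (mem_interior_iff_mem_nhds.1 hD)
  obtain ⟨t, htD, ht0⟩ := ((hnhds.filter_mono nhdsWithin_le_nhds).and
    (self_mem_nhdsWithin (s := {0}ᶜ))).exists
  have := h _ htD
  rw [mulVec_smul, smul_eq_zero] at this
  rw [zero_mulVec]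
  exact this.resolve_left ht0

namespace RPIScaling

def blockEquiv {n r : ℕ} (hrn : r ≤ n) : Fin r ⊕ Fin (n - r) ≃ Fin n :=
  finSumFinEquiv.trans (finCongr (Nat.add_sub_cancel' hrn))

theorem submatrix_blockEquiv_eq_fromBlocks {n r : ℕ} (hrn : r ≤ n)
    {A : Matrix (Fin n) (Fin n) ℝ}
    (hA : ∀ i j : Fin n, r ≤ (i : ℕ) → (j : ℕ) < r → A i j = 0) :
    A.submatrix (blockEquiv hrn) (blockEquiv hrn) =
      fromBlocks (blockA11 hrn A) (A.submatrix (blockEquiv hrn ∘ .inl) (blockEquiv hrn ∘ .inr))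
        0 (blockA22 r A) := by
  ext (i | i) (j | j)
  · rfl
  · rfl
  · exact hA _ _ (by simp [blockEquiv]) (by simp [blockEquiv])
  · rfl

theorem spectrum_eq_union_of_blockTriangular {n r : ℕ} (hrn : r ≤ n)
    {A : Matrix (Fin n) (Fin n) ℝ}
    (hA : ∀ i j : Fin n, r ≤ (i : ℕ) → (j : ℕ) < r → A i j = 0) :
    spectrum ℂ (A.map (algebraMap ℝ ℂ)) =
      spectrum ℂ ((blockA11 hrn A).map (algebraMap ℝ ℂ)) ∪
        spectrum ℂ ((blockA22 r A).map (algebraMap ℝ ℂ)) := by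
  have hchar : (A.map (algebraMap ℝ ℂ)).charpoly =
      ((blockA11 hrn A).map (algebraMap ℝ ℂ)).charpoly *
        ((blockA22 r A).map (algebraMap ℝ ℂ)).charpoly := by
    rw [← charpoly_reindex (blockEquiv hrn).symm, reindex_apply, Equiv.symm_symm,
      submatrix_map, submatrix_blockEquiv_eq_fromBlocks hrn hA, fromBlocks_map,
      Matrix.map_zero _ (map_zero _), charpoly_fromBlocks_zero₂₁]
  ext μ
  simp only [Set.mem_union, mem_spectrum_iff_isRoot_charpoly, hchar, Polynomial.root_mul]

theorem strictlyStable_of_blockTriangular {n r : ℕ} (hrn : r ≤ n) {A : Matrix (Fin n) (Fin n) ℝ}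
    (hA : ∀ i j : Fin n, r ≤ (i : ℕ) → (j : ℕ) < r → A i j = 0)
    (h₁₁ : StrictlyStable (blockA11 hrn A)) (h₂₂ : StrictlyStable (blockA22 r A)) :
    StrictlyStable A := by
  intro μ hμ
  rw [spectrum_eq_union_of_blockTriangular hrn hA] at hμ
  exact hμ.elim (h₁₁ μ) (h₂₂ μ)

open scoped Matrix.Norms.Operator in
theorem StrictlyStable.tendsto_pow_mulVec {p : ℕ} {M : Matrix (Fin p) (Fin p) ℝ}
    (hM : StrictlyStable M) (x : Fin p → ℝ) : Tendsto (fun k => (M ^ k) *ᵥ x) atTop (𝓝 0) := by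
  obtain rfl | hp := Nat.eq_zero_or_pos p
  · exact tendsto_const_nhds.congr fun _ => Subsingleton.elim _ _
  have : NeZero p := ⟨hp.ne'⟩
  have hpow : Tendsto (fun k => (M.map (algebraMap ℝ ℂ)) ^ k) atTop (𝓝 0) :=
    tendsto_pow_atTop_nhds_zero_of_spectralRadius_lt_one <| by
      simpa using spectrum.spectralRadius_lt_of_forall_lt (M.map (algebraMap ℝ ℂ)) (r := 1)
        (fun z hz => by exact_mod_cast hM z hz)
  have hre : Continuous fun N : Matrix (Fin p) (Fin p) ℂ => N.map Complex.re *ᵥ x := by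
    fun_prop
  convert (hre.tendsto 0).comp hpow using 2 with k
  · have hk : M.map (algebraMap ℝ ℂ) ^ k = (M ^ k).map (algebraMap ℝ ℂ) :=
      (map_pow (algebraMap ℝ ℂ).mapMatrix M k).symm
    have hre_ofReal : Complex.re ∘ algebraMap ℝ ℂ = id := funext Complex.ofReal_re
    rw [Function.comp_apply, hk, Matrix.map_map, hre_ofReal, Matrix.map_id]
  · simp

section RPI

variable {n m : ℕ} {A : Matrix (Fin n) (Fin n) ℝ} {E : Matrix (Fin n) (Fin m) ℝ}
  {X : Set (Fin n → ℝ)} {D : Set (Fin m → ℝ)} {α : ℝ} {P : Set (Fin n → ℝ)}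

theorem isRPI_pmax : IsRPI A E X D α (Pmax A E X D α) :=
  ⟨sUnion_subset fun _ hP => hP.1, fun _ ⟨P, hP, hxP⟩ d hd => ⟨P, hP, hP.2 _ hxP d hd⟩⟩

theorem IsRPI.subset_pmax (hP : IsRPI A E X D α P) : P ⊆ Pmax A E X D α :=
  subset_sUnion_of_mem hP

theorem IsRPI.closure (hX : IsClosed X) (hP : IsRPI A E X D α P) :
    IsRPI A E X D α (closure P) :=
  ⟨closure_minimal hP.1 hX, fun _ hx d hd =>
    map_mem_closure (f := fun y => A *ᵥ y + E *ᵥ d) (by fun_prop) hx fun y hy => hP.2 y hy d hd⟩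

theorem isClosed_pmax (hX : IsClosed X) : IsClosed (Pmax A E X D α) :=
  isClosed_of_closure_subset (isRPI_pmax.closure hX).subset_pmax

theorem IsRPI.smul (hD : StarConvex ℝ 0 D) (hP : IsRPI A E X D α P) {c : ℝ} (hc : 1 ≤ c)
    (hcP : c • P ⊆ X) : IsRPI A E X D α (c • P) := by
  refine ⟨hcP, ?_⟩
  rintro _ ⟨x, hx, rfl⟩ d hd
  have hc0 : c ≠ 0 := (zero_lt_one.trans_le hc).ne'
  have hd' : c⁻¹ • d ∈ α • D :=
    (hD.zero_smul α).smul_mem hd (inv_nonneg.2 (zero_le_one.trans hc)) (inv_le_one_of_one_le₀ hc)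
  refine ⟨A *ᵥ x + E *ᵥ (c⁻¹ • d), hP.2 x hx _ hd', ?_⟩
  simp [smul_add, mulVec_smul, smul_smul, hc0]

theorem rseq_eq_smul_rseq_one (α : ℝ) (k : ℕ) : Rseq A E D α k = α • Rseq A E D 1 k := by
  induction k with
  | zero => simp [Rseq, smul_set_singleton]
  | succ k ih =>
    simp only [Rseq, ih, one_smul, smul_add]
    rw [image_smul_comm _ _ _ fun _ => mulVec_smul _ _ _,
      image_smul_comm _ _ _ fun _ => mulVec_smul _ _ _]

theorem rinf_eq_smul_rinf_one (α : ℝ) : Rinf A E D α = α • Rinf A E D 1 := by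
  simp only [Rinf, rseq_eq_smul_rseq_one α, smul_set_iUnion]

theorem monotone_rseq (hD : (0 : Fin m → ℝ) ∈ D) : Monotone (Rseq A E D α) := by
  refine monotone_nat_of_le_succ fun k => ?_
  induction k with
  | zero =>
    rintro _ rfl
    exact ⟨0, ⟨0, rfl, mulVec_zero A⟩, 0, ⟨0, zero_mem_smul_set hD, mulVec_zero E⟩, zero_add 0⟩
  | succ k ih => exact add_subset_add (image_mono ih) Subset.rfl

theorem IsRPI.pow_mulVec_add_mem (hP : IsRPI A E X D α P) {x : Fin n → ℝ} (hx : x ∈ P) :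
    ∀ k, ∀ y ∈ Rseq A E D α k, (A ^ k) *ᵥ x + y ∈ P
  | 0, _, rfl => by simpa using hx
  | k + 1, _, ⟨_, ⟨z, hz, rfl⟩, _, ⟨d, hd, rfl⟩, rfl⟩ => by
    have h := hP.2 _ (hP.pow_mulVec_add_mem hx k z hz) d hd
    rwa [mulVec_add, mulVec_mulVec, ← pow_succ', add_assoc] at h

theorem IsRPI.rinf_subset (hX : IsClosed X) (hD : (0 : Fin m → ℝ) ∈ D)
    (hA : ∀ x, Tendsto (fun k => (A ^ k) *ᵥ x) atTop (𝓝 0)) (hP : IsRPI A E X D α P)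
    (hPne : P.Nonempty) : Rinf A E D α ⊆ X := by
  obtain ⟨x, hx⟩ := hPne
  intro y hy
  obtain ⟨j, hj⟩ := mem_iUnion.1 hy
  refine hX.mem_of_tendsto (by simpa using (hA x).add_const y) ?_
  filter_upwards [eventually_ge_atTop j] with k hk
  exact hP.1 (hP.pow_mulVec_add_mem hx k y (monotone_rseq hD hk hj))

theorem isRPI_rinf (hX : Rinf A E D α ⊆ X) : IsRPI A E X D α (Rinf A E D α) := by
  refine ⟨hX, fun x hx d hd => ?_⟩
  obtain ⟨k, hk⟩ := mem_iUnion.1 hx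
  exact mem_iUnion.2 ⟨k + 1, add_mem_add (mem_image_of_mem _ hk) (mem_image_of_mem _ hd)⟩

theorem exists_ne_zero_mem_rinf_one (hE : E ≠ 0) (hD : (0 : Fin m → ℝ) ∈ interior D) :
    ∃ y ∈ Rinf A E D 1, y ≠ 0 := by
  obtain ⟨d, hd, hEd⟩ := E.exists_mulVec_ne_zero_of_zero_mem_interior hE hD
  refine ⟨E *ᵥ d, mem_iUnion.2 ⟨1, ?_⟩, hEd⟩
  exact ⟨0, ⟨0, rfl, mulVec_zero A⟩, E *ᵥ d, ⟨d, by simpa using hd, rfl⟩, zero_add _⟩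

theorem frontier_pmax_inter_frontier_nonempty (hX : IsCompact X) (hD : StarConvex ℝ 0 D)
    {x : Fin n → ℝ} (hx : x ∈ Pmax A E X D α) (hx0 : x ≠ 0) :
    (frontier (Pmax A E X D α) ∩ frontier X).Nonempty := by
  by_contra hfr
  have hPX := subset_interior_of_frontier_inter_frontier_eq_empty isRPI_pmax.1
    (not_nonempty_iff_eq_empty.1 hfr)
  have hPc : IsCompact (Pmax A E X D α) :=
    hX.of_isClosed_subset (isClosed_pmax hX.isClosed) isRPI_pmax.1
  obtain ⟨c, hc, hcP⟩ := hPc.exists_one_lt_smul_subset isOpen_interior hPX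
  have hcPP := (isRPI_pmax.smul hD hc.le (hcP.trans interior_subset)).subset_pmax
  exact hx0 (eq_zero_of_smul_subset_self hPc.isBounded hc hcPP hx)

end RPI

theorem ne_zero_of_rank_controllabilityMatrix {n m r : ℕ} (hrn : r ≤ n)
    {A : Matrix (Fin n) (Fin n) ℝ} {E : Matrix (Fin n) (Fin m) ℝ} (hr : 0 < r)
    (h : (controllabilityMatrix hrn A E).rank = r) : E ≠ 0 := by
  rintro rfl
  have h0 : controllabilityMatrix hrn A (0 : Matrix (Fin n) (Fin m) ℝ) = 0 := by
    ext
    simp [controllabilityMatrix, blockE1]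
  rw [h0, rank_zero] at h
  omega

theorem alphaStar_eq_sSup_smul_rinf_one {n m : ℕ} (A : Matrix (Fin n) (Fin n) ℝ)
    (E : Matrix (Fin n) (Fin m) ℝ) (X : Set (Fin n → ℝ)) (D : Set (Fin m → ℝ)) :
    alphaStar A E X D = sSup {β : ℝ | 0 < β ∧ β • Rinf A E D 1 ⊆ X} := by
  simp_rw [alphaStar, ← rinf_eq_smul_rinf_one]

theorem pmax_boundary_contact_iff_le_alphaStar {n m r : ℕ} (hrn : r ≤ n)
    (A : Matrix (Fin n) (Fin n) ℝ) (E : Matrix (Fin n) (Fin m) ℝ)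
    (X : Set (Fin n → ℝ)) (D : Set (Fin m → ℝ))
    (hA1 : Assumption1 hrn A E X D) (hA2 : Assumption2 hrn A)
    (α : ℝ) (hα : 0 < α) :
    (frontier (Pmax A E X D α) ∩ frontier X).Nonempty ↔ α ≤ alphaStar A E X D := by
  obtain ⟨hXconv, hXc, hX0⟩ := hA1.hX
  obtain ⟨hDconv, -, hD0⟩ := hA1.hD
  have hA : StrictlyStable A :=
    strictlyStable_of_blockTriangular hrn hA1.lowerLeftA hA2.1 hA2.2
  obtain ⟨y, hyR, hy0⟩ := exists_ne_zero_mem_rinf_one (A := A)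
    (ne_zero_of_rank_controllabilityMatrix hrn hA1.hr hA1.controllable) hD0
  rw [alphaStar_eq_sSup_smul_rinf_one, le_sSup_smul_subset_iff hXc.isClosed
    (hXconv.starConvex (interior_subset hX0)) hXc.isBounded hyR hy0 hα, ← rinf_eq_smul_rinf_one]
  constructor
  · rintro ⟨x, hx, -⟩
    exact isRPI_pmax.rinf_subset hXc.isClosed (interior_subset hD0) hA.tendsto_pow_mulVec
      (closure_nonempty_iff.1 ⟨x, frontier_subset_closure hx⟩)
  · intro hR
    refine frontier_pmax_inter_frontier_nonempty hXc (hDconv.starConvex (interior_subset hD0))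
      ((isRPI_rinf hR).subset_pmax ?_) (smul_ne_zero hα.ne' hy0)
    rw [rinf_eq_smul_rinf_one]
    exact smul_mem_smul_set hyR

end RPIScaling
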